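/- Let B be a set, M = (B →₀ ℕ) the monoid of finitely supported ℕ-valued functions, and let C be any set. Suppose f assigns to each pair (P, R) of nonzero elements of M an element f(P, R) ∈ C such that: (i) f(P, R) = f(R, P) for all nonzero P, R; (ii) f(P + Q, R) = f(P, Q + R) for all nonzero P, Q, R. Then f(P, R) depends only on P + R: whenever P + R = P′ + R′ (with P, R, P′, R′ all nonzero), one has f(P, R) = f(P′, R′). -/

import Mathlib

/-!
Associativity lets a nonzero summand slide from one argument to the other. Choose an atom
`e = single b 1` below `P`; sliding everything else to the right turns `f P R` into `f e S`
with `e + S = P + R`. Since `e` is an atom of `B →₀ ℕ`, it also lies below `P'` or `R'`, so by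
symmetry `f P' R'` reduces to the same value `f e S`.
-/

section Slide

variable {M C : Type*} [AddMonoid M] {f : M → M → C}

theorem apply_add_left_eq_apply_add_right
    (hassoc : ∀ P Q R : M, P ≠ 0 → Q ≠ 0 → R ≠ 0 → f (P + Q) R = f P (Q + R))
    {a Q R : M} (ha : a ≠ 0) (hR : R ≠ 0) : f (a + Q) R = f a (Q + R) := by
  rcases eq_or_ne Q 0 with rfl | hQ
  · simp
  · exact hassoc a Q R ha hQ hR

variable [LE M] [ExistsAddOfLE M] [IsLeftCancelAdd M]

theorem apply_eq_apply_of_le_left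
    (hassoc : ∀ P Q R : M, P ≠ 0 → Q ≠ 0 → R ≠ 0 → f (P + Q) R = f P (Q + R))
    {a P R S : M} (ha : a ≠ 0) (hR : R ≠ 0) (haP : a ≤ P) (hS : a + S = P + R) :
    f P R = f a S := by
  obtain ⟨Q, rfl⟩ := exists_add_of_le haP
  rw [add_assoc] at hS
  rw [add_left_cancel hS]
  exact apply_add_left_eq_apply_add_right hassoc ha hR

end Slide

theorem apply_eq_apply_of_le_or_le {M C : Type*} [AddCommMonoid M] [LE M] [ExistsAddOfLE M]
    [IsLeftCancelAdd M] {f : M → M → C}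
    (hsymm : ∀ P R : M, P ≠ 0 → R ≠ 0 → f P R = f R P)
    (hassoc : ∀ P Q R : M, P ≠ 0 → Q ≠ 0 → R ≠ 0 → f (P + Q) R = f P (Q + R))
    {a P R S : M} (ha : a ≠ 0) (hP : P ≠ 0) (hR : R ≠ 0) (haPR : a ≤ P ∨ a ≤ R)
    (hS : a + S = P + R) : f P R = f a S := by
  rcases haPR with haP | haR
  · exact apply_eq_apply_of_le_left hassoc ha hR haP hS
  · rw [hsymm P R hP hR]
    refine apply_eq_apply_of_le_left hassoc ha hP haR ?_
    rw [hS, add_comm]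

theorem Finsupp.single_one_le_or_of_le_add {B : Type*} {b : B} {P R : B →₀ ℕ}
    (h : Finsupp.single b 1 ≤ P + R) : Finsupp.single b 1 ≤ P ∨ Finsupp.single b 1 ≤ R := by
  simp only [Finsupp.single_le_iff, Finsupp.add_apply] at h ⊢
  omega

/-- A symmetric "associative" function on pairs of nonzero elements of `B →₀ ℕ`
depends only on the sum of its arguments. -/
theorem stmt_12 {B C : Type*} (f : (B →₀ ℕ) → (B →₀ ℕ) → C)
    (hsymm : ∀ P R : B →₀ ℕ, P ≠ 0 → R ≠ 0 → f P R = f R P)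
    (hassoc : ∀ P Q R : B →₀ ℕ, P ≠ 0 → Q ≠ 0 → R ≠ 0 → f (P + Q) R = f P (Q + R)) :
    ∀ P R P' R' : B →₀ ℕ, P ≠ 0 → R ≠ 0 → P' ≠ 0 → R' ≠ 0 →
      P + R = P' + R' → f P R = f P' R' := by
  intro P R P' R' hP hR hP' hR' hsum
  obtain ⟨b, hb⟩ : ∃ b, P b ≠ 0 := by simpa [Finsupp.ext_iff] using hP
  have he : Finsupp.single b 1 ≠ 0 := by simp
  have heP : Finsupp.single b 1 ≤ P := Finsupp.single_le_iff.2 (Nat.one_le_iff_ne_zero.2 hb)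
  have hePR : Finsupp.single b 1 ≤ P + R := heP.trans le_self_add
  obtain ⟨S, hS⟩ := exists_add_of_le hePR
  calc f P R = f (Finsupp.single b 1) S :=
        apply_eq_apply_of_le_or_le hsymm hassoc he hP hR (.inl heP) hS.symm
    _ = f P' R' := by
        rw [hsum] at hS hePR
        exact (apply_eq_apply_of_le_or_le hsymm hassoc he hP' hR'
          (Finsupp.single_one_le_or_of_le_add hePR) hS.symm).symm
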